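/- arXiv:1705.07041 — 3 statements merged into one kernel-verified Lean document; each statement's English description precedes it below -/
import Mathlib

section
/- Let S ≥ 1, D > 0, n ≥ 1. Let p̂ ∈ Δ^S be the average of n i.i.d. multinoulli trials with parameter p ∈ Δ^S. Define Δ_i := √( 3·p̂_i·log(4S)/n ) + 3·log(4S)/n, p⁻ := p̂ − Δ (coordinatewise), and let z be a random vector picked uniformly at random from the standard basis vectors {e_1, …, e_S}, independently of the trials; set p̃ := p⁻ + (1 − Σ_{i=1}^S p⁻_i)·z. Then for any fixed h ∈ [0,D]^S, Pr( p̃ᵀh ≥ pᵀh ) ≥ 1/(2S). -/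
open MeasureTheory ProbabilityTheory Finset

noncomputable section

/-- Law of a `Dirichlet(α)` random vector: the law of `(X i / ∑ j, X j) i` where the `X i`
are independent with `X i ~ Gamma (α i) 1`. -/
def dirichletLaw {S : ℕ} (α : Fin S → ℝ) : Measure (Fin S → ℝ) :=
  (Measure.pi fun i => gammaMeasure (α i) 1).map (fun x i => x i / ∑ j, x j)

/-- The categorical (multinoulli) measure on `Fin S` with parameter `p`. -/
def catMeasure {S : ℕ} (p : Fin S → ℝ) : Measure (Fin S) :=
  ∑ i : Fin S, ENNReal.ofReal (p i) • Measure.dirac i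

/-- Joint law of `n` i.i.d. multinoulli trials with parameter `p`. -/
def trialsLaw {S : ℕ} (p : Fin S → ℝ) (n : ℕ) : Measure (Fin n → Fin S) :=
  Measure.pi fun _ : Fin n => catMeasure p

/-- The empirical distribution (the average `p̂` of the `n` multinoulli trials `x`). -/
def empDist {S n : ℕ} (x : Fin n → Fin S) (i : Fin S) : ℝ :=
  ((Finset.univ.filter fun j => x j = i).card : ℝ) / (n : ℝ)

/-- The downward-shifted empirical estimate `p⁻ i = p̂ i - Δ i` used in simple
optimistic sampling. -/
def pminus {S n : ℕ} (x : Fin n → Fin S) (i : Fin S) : ℝ :=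
  empDist x i - (Real.sqrt (3 * empDist x i * Real.log (4 * S) / n) + 3 * Real.log (4 * S) / n)

/-- The simple optimistic sample: `p̃ = p⁻ + (1 - ∑ i, p⁻ i) • e_z` where `z` is the extra
uniformly random coordinate. -/
def ptilde {S n : ℕ} (x : Fin n → Fin S) (z : Fin S) (i : Fin S) : ℝ :=
  pminus x i + (1 - ∑ j, pminus x j) * (if i = z then 1 else 0)

/-- Joint law of the `n` multinoulli trials together with an independent coordinate
`z` drawn uniformly from `{1, …, S}` (i.e., uniformly among the basis vectors). -/
def simpleLaw {S : ℕ} (p : Fin S → ℝ) (n : ℕ) : Measure ((Fin n → Fin S) × Fin S) :=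
  (trialsLaw p n).prod (((S : ENNReal))⁻¹ • Measure.count)

/-!
Let `z⋆` maximise `h`. The mass `1 - ∑ p⁻` is put entirely on the coordinate `z`, so whenever
`p⁻ ≤ p` coordinatewise and `z = z⋆`, the vector `p̃ - p` moves mass from other coordinates onto
the best one and `p̃ᵀh ≥ pᵀh`. The event `z = z⋆` has probability `1/S` and is independent of the
trials. For each `i`, `p i < p⁻ i` forces `n p̂ i ≥ n (p i + t)`, where `t` solves
`n t² = (2 p i + t) log (4S)`, and the Chernoff bound `exp (-n t² / (2 p i + t))` for this binomial
tail is `1/(4S)`. A union bound over `i` leaves `p⁻ ≤ p` with probability at least `3/4`.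
-/

open Real

lemma exists_chernoff_exponent {P t : ℝ} (hP : 0 ≤ P) (ht : 0 < t) :
    ∃ lam, 0 ≤ lam ∧ P * (exp lam - 1) - lam * (P + t) ≤ -(t ^ 2 / (2 * P + t)) := by
  rcases hP.eq_or_lt with rfl | hP
  · refine ⟨1, zero_le_one, le_of_eq ?_⟩
    field_simp
    ring
  -- `log (1 + t / P)` is the optimal exponent, and `log (1 + x) ≥ 2x / (x + 2)` bounds it below.
  · refine ⟨log (1 + t / P), log_nonneg (by linarith [div_pos ht hP]), ?_⟩
    have hlog := le_log_one_add_of_nonneg (div_pos ht hP).le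
    rw [exp_log (by positivity)]
    rw [div_le_iff₀ (by positivity)] at hlog
    rw [le_neg, neg_sub, div_le_iff₀ (by positivity)]
    field_simp at hlog ⊢
    nlinarith

lemma lt_mul_sq_of_lt_sub_sqrt {N P L e : ℝ} (hN : 0 < N) (hL : 0 < L)
    (h : P < e - (√(3 * e * L / N) + 3 * L / N)) :
    0 < e - P ∧ L * (P + e) < N * (e - P) ^ 2 := by
  set v := e - P
  have h3L : 0 < 3 * L / N := by positivity
  have hsqrt : √(3 * e * L / N) < v - 3 * L / N := by linarith
  have hv : 3 * L / N < v := by linarith [sqrt_nonneg (3 * e * L / N)]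
  have hsq := (sqrt_lt' (by linarith)).1 hsqrt
  have he : e = P + v := by ring
  rw [he] at hsq
  refine ⟨by linarith, ?_⟩
  rw [div_lt_iff₀ hN] at hv
  field_simp at hsq
  rw [he]
  nlinarith

lemma exists_threshold {N P L : ℝ} (hN : 0 < N) (hP : 0 ≤ P) (hL : 0 < L) :
    ∃ t, 0 < t ∧ N * t ^ 2 / (2 * P + t) = L ∧
      ∀ e, P < e - (√(3 * e * L / N) + 3 * L / N) → P + t ≤ e := by
  set r := √(L ^ 2 + 8 * N * P * L)
  have hr : r ^ 2 = L ^ 2 + 8 * N * P * L := sq_sqrt (by positivity)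
  have hLr : L ≤ r := le_sqrt_of_sq_le (by nlinarith [mul_nonneg (mul_nonneg hN.le hP) hL.le])
  refine ⟨(L + r) / (2 * N), by positivity, ?_, fun e he => ?_⟩
  · rw [div_eq_iff (by positivity)]
    field_simp
    linear_combination hr
  · obtain ⟨hv, hsq⟩ := lt_mul_sq_of_lt_sub_sqrt hN hL he
    by_contra! hlt
    have hlt' : 2 * N * (e - P) < L + r := by
      rw [← lt_div_iff₀' (by positivity)]; linarith
    have : (2 * N * (e - P) - L) ^ 2 > r ^ 2 := by nlinarith
    nlinarith [mul_pos hN hv]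

lemma sum_mul_le_of_le_of_forall_le {ι : Type*} [Fintype ι] {p q h : ι → ℝ} {z : ι}
    (hqp : ∀ i, q i ≤ p i) (hp : ∑ i, p i = 1) (hz : ∀ i, h i ≤ h z) :
    ∑ i, p i * h i ≤ ∑ i, q i * h i + (1 - ∑ i, q i) * h z := by
  have key : ∑ i, (p i - q i) * h i ≤ ∑ i, (p i - q i) * h z :=
    sum_le_sum fun i _ => mul_le_mul_of_nonneg_left (hz i) (sub_nonneg.2 (hqp i))
  simp only [sub_mul, sum_sub_distrib, ← sum_mul, hp] at key
  linarith

section Trials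

variable {S n : ℕ} {p : Fin S → ℝ}

lemma catMeasure_singleton (p : Fin S → ℝ) (k : Fin S) :
    catMeasure p {k} = ENNReal.ofReal (p k) := by
  classical
  simp [catMeasure, Measure.dirac_apply', Set.indicator, Finset.sum_ite_eq']

instance (p : Fin S → ℝ) : IsFiniteMeasure (catMeasure p) where
  measure_univ_lt_top := by
    rw [← Finset.coe_univ, ← sum_measure_singleton]
    simp [catMeasure_singleton]

lemma isProbabilityMeasure_catMeasure (hp : p ∈ stdSimplex ℝ (Fin S)) :
    IsProbabilityMeasure (catMeasure p) := by
  constructor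
  rw [← Finset.coe_univ, ← sum_measure_singleton]
  simp_rw [catMeasure_singleton]
  rw [← ENNReal.ofReal_sum_of_nonneg fun i _ => hp.1 i]
  simp [hp.2]

lemma isProbabilityMeasure_trialsLaw (hp : p ∈ stdSimplex ℝ (Fin S)) :
    IsProbabilityMeasure (trialsLaw p n) := by
  have := isProbabilityMeasure_catMeasure hp
  unfold trialsLaw
  infer_instance

lemma trialsLaw_singleton (hp0 : ∀ i, 0 ≤ p i) (x : Fin n → Fin S) :
    trialsLaw p n {x} = ENNReal.ofReal (∏ j, p (x j)) := by
  rw [trialsLaw, ← Set.univ_pi_singleton x, Measure.pi_pi]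
  simp_rw [catMeasure_singleton]
  rw [ENNReal.ofReal_prod_of_nonneg fun j _ => hp0 (x j)]

lemma trialsLaw_apply (hp0 : ∀ i, 0 ≤ p i) (A : Set (Fin n → Fin S)) [DecidablePred (· ∈ A)] :
    trialsLaw p n A = ENNReal.ofReal (∑ x with x ∈ A, ∏ j, p (x j)) := by
  have hA : ((univ.filter (· ∈ A) : Finset _) : Set (Fin n → Fin S)) = A := by ext; simp
  rw [← sum_measure_singleton.trans (congrArg _ hA)]
  simp_rw [trialsLaw_singleton hp0]
  rw [ENNReal.ofReal_sum_of_nonneg fun x _ => prod_nonneg fun j _ => hp0 (x j)]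

lemma sum_prod_mul_pow_card (hp : ∑ k, p k = 1) (i : Fin S) (c : ℝ) :
    ∑ x : Fin n → Fin S, (∏ j, p (x j)) * c ^ #{j | x j = i} = (1 + p i * (c - 1)) ^ n := by
  classical
  set g : Fin S → ℝ := fun k => p k * c ^ (if k = i then 1 else 0)
  have hprod : ∀ x : Fin n → Fin S, ∏ j, g (x j) = (∏ j, p (x j)) * c ^ #{j | x j = i} := by
    intro x
    rw [prod_mul_distrib, prod_pow_eq_pow_sum, sum_boole, Nat.cast_id]
  have hg : ∀ k, g k = p k + if k = i then p i * (c - 1) else 0 := by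
    intro k
    by_cases hk : k = i
    · subst hk; simp only [g, if_true, pow_one]; ring
    · simp only [g, hk, if_false, pow_zero, mul_one, add_zero]
  simp_rw [← hprod, ← Fintype.sum_pow, hg, sum_add_distrib, hp, sum_ite_eq', mem_univ, if_true]

lemma trialsLaw_le_card_le_exp (hp : p ∈ stdSimplex ℝ (Fin S)) (i : Fin S) {lam : ℝ}
    (hlam : 0 ≤ lam) (a : ℝ) :
    trialsLaw p n {x | a ≤ #{j | x j = i}} ≤
      ENNReal.ofReal (exp (n * (p i * (exp lam - 1)) - lam * a)) := by
  classical
  rw [trialsLaw_apply hp.1]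
  refine ENNReal.ofReal_le_ofReal ?_
  have hP : ∀ x : Fin n → Fin S, 0 ≤ ∏ j, p (x j) := fun x => prod_nonneg fun j _ => hp.1 (x j)
  calc _ ≤ ∑ x : Fin n → Fin S with a ≤ #{j | x j = i},
          exp (-(lam * a)) * ((∏ j, p (x j)) * exp lam ^ #{j | x j = i}) := by
        refine sum_le_sum fun x hx => ?_
        have hc : a ≤ #{j | x j = i} := (mem_filter.1 hx).2
        have hexp : 1 ≤ exp (-(lam * a)) * exp lam ^ #{j | x j = i} := by
          rw [← exp_nat_mul, ← exp_add]
          exact one_le_exp (by nlinarith)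
        rw [mul_left_comm]
        exact le_mul_of_one_le_right (hP x) hexp
    _ ≤ ∑ x : Fin n → Fin S, exp (-(lam * a)) * ((∏ j, p (x j)) * exp lam ^ #{j | x j = i}) :=
        sum_le_sum_of_subset_of_nonneg (filter_subset _ _) fun x _ _ => by
          have := hP x
          positivity
    _ = exp (-(lam * a)) * (1 + p i * (exp lam - 1)) ^ n := by
        rw [← mul_sum, sum_prod_mul_pow_card hp.2]
    _ ≤ exp (-(lam * a)) * exp (n * (p i * (exp lam - 1))) := by
        have hy : 0 ≤ p i * (exp lam - 1) := mul_nonneg (hp.1 i) (sub_nonneg.2 (one_le_exp hlam))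
        rw [exp_nat_mul]
        gcongr
        linarith [add_one_le_exp (p i * (exp lam - 1))]
    _ = exp (n * (p i * (exp lam - 1)) - lam * a) := by
        rw [← exp_add]; ring_nf

lemma trialsLaw_add_le_card_le_exp (hp : p ∈ stdSimplex ℝ (Fin S)) (i : Fin S) {t : ℝ}
    (ht : 0 < t) :
    trialsLaw p n {x | n * (p i + t) ≤ #{j | x j = i}} ≤
      ENNReal.ofReal (exp (-(n * t ^ 2 / (2 * p i + t)))) := by
  obtain ⟨lam, hlam, hexp⟩ := exists_chernoff_exponent (hp.1 i) ht
  refine (trialsLaw_le_card_le_exp hp i hlam _).trans (ENNReal.ofReal_le_ofReal (exp_le_exp.2 ?_))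
  have := mul_le_mul_of_nonneg_left hexp (Nat.cast_nonneg n : (0 : ℝ) ≤ n)
  rw [mul_div_assoc]
  linarith

lemma trialsLaw_lt_pminus_le (hn : 1 ≤ n) (hp : p ∈ stdSimplex ℝ (Fin S)) (i : Fin S) :
    trialsLaw p n {x | p i < pminus x i} ≤ ENNReal.ofReal (1 / (4 * S)) := by
  have hS : 0 < S := Fin.pos i
  have hn' : (0 : ℝ) < n := by exact_mod_cast hn
  have hL : 0 < log (4 * S) := log_pos (by norm_cast; omega)
  obtain ⟨t, ht, htL, hthr⟩ := exists_threshold hn' (hp.1 i) hL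
  have hsub : {x : Fin n → Fin S | p i < pminus x i} ⊆
      {x | n * (p i + t) ≤ #{j | x j = i}} := fun x hx => by
    have hcard : (#{j | x j = i} : ℝ) = n * empDist x i := by
      rw [empDist, mul_div_cancel₀ _ hn'.ne']
    rw [Set.mem_ofPred_eq, hcard]
    exact mul_le_mul_of_nonneg_left (hthr _ hx) hn'.le
  refine (measure_mono hsub).trans ((trialsLaw_add_le_card_le_exp hp i ht).trans_eq ?_)
  rw [htL, exp_neg, exp_log (by positivity), one_div]

lemma three_div_four_le_trialsLaw_pminus_le (hn : 1 ≤ n) (hp : p ∈ stdSimplex ℝ (Fin S)) :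
    3 / 4 ≤ trialsLaw p n {x | ∀ i, pminus x i ≤ p i} := by
  have := isProbabilityMeasure_trialsLaw (n := n) hp
  have hbad : trialsLaw p n {x | ∀ i, pminus x i ≤ p i}ᶜ ≤ 4⁻¹ := by
    calc trialsLaw p n {x | ∀ i, pminus x i ≤ p i}ᶜ
        ≤ trialsLaw p n (⋃ i, {x | p i < pminus x i}) :=
          measure_mono fun x hx => by simpa using hx
      _ ≤ ∑ i, trialsLaw p n {x | p i < pminus x i} := measure_iUnion_fintype_le _ _
      _ ≤ ∑ _i : Fin S, ENNReal.ofReal (1 / (4 * S)) :=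
          sum_le_sum fun i _ => trialsLaw_lt_pminus_le hn hp i
      _ = ENNReal.ofReal (S * (1 / (4 * S))) := by
          rw [sum_const, card_univ, Fintype.card_fin, ← ENNReal.ofReal_nsmul, nsmul_eq_mul]
      _ ≤ ENNReal.ofReal 4⁻¹ := ENNReal.ofReal_le_ofReal <| by
          rcases S.eq_zero_or_pos with rfl | hS
          · norm_num
          · exact (by field_simp : (S : ℝ) * (1 / (4 * S)) = 4⁻¹).le
      _ = 4⁻¹ := by rw [ENNReal.ofReal_inv_of_pos (by norm_num)]; norm_num
  calc (3 / 4 : ENNReal) = 1 - 4⁻¹ := by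
        refine (ENNReal.sub_eq_of_eq_add (by simp) ?_).symm
        rw [ENNReal.div_eq_inv_mul, ← mul_add_one, show (3 + 1 : ENNReal) = 4 by norm_num,
          ENNReal.inv_mul_cancel (by norm_num) (by simp)]
    _ ≤ 1 - trialsLaw p n {x | ∀ i, pminus x i ≤ p i}ᶜ := tsub_le_tsub_left hbad 1
    _ = trialsLaw p n {x | ∀ i, pminus x i ≤ p i} := by
        rw [← prob_compl_eq_one_sub .of_discrete, compl_compl]

end Trials

lemma sum_ptilde_mul {S n : ℕ} (x : Fin n → Fin S) (z : Fin S) (h : Fin S → ℝ) :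
    ∑ i, ptilde x z i * h i = ∑ i, pminus x i * h i + (1 - ∑ i, pminus x i) * h z := by
  simp [ptilde, add_mul, sum_add_distrib]

theorem stmt_12_general (S n : ℕ) (hS : 1 ≤ S) (hn : 1 ≤ n)
    (p : Fin S → ℝ) (hp : p ∈ stdSimplex ℝ (Fin S))
    (h : Fin S → ℝ) :
    ENNReal.ofReal (1 / (2 * S)) ≤
      simpleLaw p n
        {y | ∑ i, p i * h i ≤ ∑ i, ptilde y.1 y.2 i * h i} := by
  obtain ⟨z, -, hz⟩ := exists_max_image univ h ⟨⟨0, hS⟩, mem_univ _⟩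
  have hsub : {x | ∀ i, pminus x i ≤ p i} ×ˢ {z} ⊆
      {y : (Fin n → Fin S) × Fin S | ∑ i, p i * h i ≤ ∑ i, ptilde y.1 y.2 i * h i} := by
    rintro ⟨x, w⟩ ⟨hx, rfl⟩
    rw [Set.mem_ofPred_eq, sum_ptilde_mul]
    exact sum_mul_le_of_le_of_forall_le hx hp.2 fun i => hz i (mem_univ i)
  calc ENNReal.ofReal (1 / (2 * S)) = 2⁻¹ * (S : ENNReal)⁻¹ := by
        rw [one_div, ENNReal.ofReal_inv_of_pos (by positivity), ENNReal.ofReal_mul (by norm_num),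
          ENNReal.mul_inv (by simp) (by simp)]
        simp
    _ ≤ trialsLaw p n {x | ∀ i, pminus x i ≤ p i} * ((S : ENNReal)⁻¹ • Measure.count) {z} := by
        rw [Measure.smul_apply, Measure.count_singleton, smul_eq_mul, mul_one]
        gcongr
        refine le_trans ?_ (three_div_four_le_trialsLaw_pminus_le hn hp)
        rw [← ENNReal.toReal_le_toReal (by simp) (ENNReal.div_ne_top (by simp) (by simp))]
        norm_num
    _ = simpleLaw p n ({x | ∀ i, pminus x i ≤ p i} ×ˢ {z}) := (Measure.prod_prod _ _).symm
    _ ≤ _ := measure_mono hsub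

/-- Optimism of the simple optimistic sample (Lemma `optimismSmallN` of the paper). -/
theorem stmt_12 (S n : ℕ) (hS : 1 ≤ S) (hn : 1 ≤ n) (D : ℝ) (hD : 0 < D)
    (p : Fin S → ℝ) (hp : p ∈ stdSimplex ℝ (Fin S))
    (h : Fin S → ℝ) (hh : ∀ i, h i ∈ Set.Icc (0 : ℝ) D) :
    ENNReal.ofReal (1 / (2 * S)) ≤
      simpleLaw p n
        {y | ∑ i, p i * h i ≤ ∑ i, ptilde y.1 y.2 i * h i} :=
  stmt_12_general S n hS hn p hp h
end
end

section
/- Let S ≥ 2 and let p̃, p̄ ∈ Δ^S be probability vectors all of whose tail sums p̃_i + ⋯ + p̃_S and p̄_i + ⋯ + p̄_S are positive. For i = 1,…,S−1 define ỹ_i := p̃_i/(p̃_i+⋯+p̃_S), ȳ_i := p̄_i/(p̄_i+⋯+p̄_S), H̃_{i+1} := (Σ_{j=i+1}^S h_j·p̃_j)/(Σ_{j=i+1}^S p̃_j), and H̄_{i+1} := (Σ_{j=i+1}^S h_j·p̄_j)/(Σ_{j=i+1}^S p̄_j). Then for any h ∈ ℝ^S: (p̃ − p̄)ᵀh = Σ_{i=1}^{S−1}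 (ỹ_i − ȳ_i)·(h_i − H̃_{i+1})·(p̄_i + ⋯ + p̄_S) = Σ_{i=1}^{S−1} (ỹ_i − ȳ_i)·(h_i − H̄_{i+1})·(p̃_i + ⋯ + p̃_S). -/
/-!
Let `Φ(s) = ∑_{j ∈ s} p̄_j (H̃_s - h_j)`, where `H̃_s` is the `p̃`-weighted mean of `h` over `s`.
With `s` running over the tails `{i, …, S}`, a direct computation shows that the `i`-th summand is
`Φ({i, …, S}) - Φ({i+1, …, S})`, so the sum telescopes to `Φ({1, …, S}) - Φ({S})`.
The last term vanishes, and since `p̃` and `p̄` have the same total mass the first is `(p̃ - p̄)ᵀh`.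
Exchanging `p̃` and `p̄` gives the second identity.
-/

open Finset

section StickPotential

variable {α : Type*} (p q h : α → ℝ)

noncomputable def stickPotential (s : Finset α) : ℝ :=
  (∑ j ∈ s, q j) * ((∑ j ∈ s, h j * p j) / ∑ j ∈ s, p j) - ∑ j ∈ s, q j * h j

variable {p q h}

lemma stickPotential_singleton {a : α} (ha : p a ≠ 0) : stickPotential p q h {a} = 0 := by
  simp only [stickPotential, sum_singleton]
  field_simp
  ring

lemma stickPotential_eq_sum_sub_mul {s : Finset α} (hs : ∑ j ∈ s, p j ≠ 0)
    (hpq : ∑ j ∈ s, p j = ∑ j ∈ s, q j) :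
    stickPotential p q h s = ∑ j ∈ s, (p j - q j) * h j := by
  rw [stickPotential, ← hpq, mul_div_cancel₀ _ hs, ← sum_sub_distrib]
  exact sum_congr rfl fun j _ => by ring

lemma stick_term_eq_stickPotential_sub [PartialOrder α] [LocallyFiniteOrderTop α] (a : α)
    (hp : ∑ j ∈ Ici a, p j ≠ 0) (hp' : ∑ j ∈ Ioi a, p j ≠ 0) (hq : ∑ j ∈ Ici a, q j ≠ 0) :
    (p a / ∑ j ∈ Ici a, p j - q a / ∑ j ∈ Ici a, q j) *
        (h a - (∑ j ∈ Ioi a, h j * p j) / ∑ j ∈ Ioi a, p j) * ∑ j ∈ Ici a, q j =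
      stickPotential p q h (Ici a) - stickPotential p q h (Ioi a) := by
  simp only [stickPotential, ← add_sum_Ioi_eq_sum_Ici] at hp hq ⊢
  field_simp
  ring

end StickPotential

lemma Fin.sum_castSucc_sub_succ {M : Type*} [AddCommGroup M] {n : ℕ} (f : Fin (n + 1) → M) :
    ∑ i : Fin n, (f i.castSucc - f i.succ) = f 0 - f (last n) := by
  rw [sum_sub_distrib, eq_sub_iff_add_eq, sub_add_eq_add_sub, sub_eq_iff_eq_add,
    ← Fin.sum_univ_castSucc, Fin.sum_univ_succ, add_comm]

lemma Fin.Ioi_castSucc {n : ℕ} (i : Fin n) : Ioi i.castSucc = Ici i.succ := by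
  ext j; simp [Fin.castSucc_lt_iff_succ_le]

lemma Fin.Ici_last (n : ℕ) : Ici (last n) = {last n} := by
  ext j; simp [Fin.last_le_iff]

lemma Fin.sum_filter_val_lt {M : Type*} [AddCommMonoid M] {n : ℕ} (f : Fin (n + 1) → M) :
    ∑ i ∈ univ.filter (fun i : Fin (n + 1) => (i : ℕ) < n), f i = ∑ i : Fin n, f i.castSucc := by
  simp [sum_filter, Fin.sum_univ_castSucc]

theorem sum_stick_terms_eq_sum_sub_mul {n : ℕ} {p q : Fin (n + 1) → ℝ} (h : Fin (n + 1) → ℝ)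
    (hpq : ∑ i, p i = ∑ i, q i)
    (hp : ∀ i, ∑ j ∈ Ici i, p j ≠ 0) (hq : ∀ i, ∑ j ∈ Ici i, q j ≠ 0) :
    ∑ i : Fin n,
        (p i.castSucc / ∑ j ∈ Ici i.castSucc, p j - q i.castSucc / ∑ j ∈ Ici i.castSucc, q j) *
          (h i.castSucc - (∑ j ∈ Ioi i.castSucc, h j * p j) / ∑ j ∈ Ioi i.castSucc, p j) *
          ∑ j ∈ Ici i.castSucc, q j =
      ∑ i, (p i - q i) * h i := by
  have hterm (i : Fin n) := stick_term_eq_stickPotential_sub (h := h) i.castSucc (hp _)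
    (by simpa [Fin.Ioi_castSucc] using hp i.succ) (hq _)
  rw [sum_congr rfl fun i _ => hterm i]
  simp only [Fin.Ioi_castSucc]
  rw [Fin.sum_castSucc_sub_succ (fun i => stickPotential p q h (Ici i)), Ici_zero_eq_univ,
    Fin.Ici_last]
  have hlast : p (Fin.last n) ≠ 0 := by simpa [Fin.Ici_last] using hp (Fin.last n)
  rw [stickPotential_singleton hlast, sub_zero,
    stickPotential_eq_sum_sub_mul (by simpa using hp 0) hpq]

theorem stmt_18_general (S : ℕ) (pt pb : Fin S → ℝ)
    (hpt : pt ∈ stdSimplex ℝ (Fin S)) (hpb : pb ∈ stdSimplex ℝ (Fin S))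
    (htt : ∀ i, 0 < ∑ j ∈ Finset.Ici i, pt j)
    (htb : ∀ i, 0 < ∑ j ∈ Finset.Ici i, pb j)
    (h : Fin S → ℝ) :
    (∑ i, (pt i - pb i) * h i =
      ∑ i ∈ Finset.univ.filter (fun i : Fin S => (i : ℕ) < S - 1),
        (pt i / ∑ j ∈ Finset.Ici i, pt j - pb i / ∑ j ∈ Finset.Ici i, pb j) *
          (h i - (∑ j ∈ Finset.Ioi i, h j * pt j) / (∑ j ∈ Finset.Ioi i, pt j)) *
          (∑ j ∈ Finset.Ici i, pb j)) ∧
    (∑ i, (pt i - pb i) * h i =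
      ∑ i ∈ Finset.univ.filter (fun i : Fin S => (i : ℕ) < S - 1),
        (pt i / ∑ j ∈ Finset.Ici i, pt j - pb i / ∑ j ∈ Finset.Ici i, pb j) *
          (h i - (∑ j ∈ Finset.Ioi i, h j * pb j) / (∑ j ∈ Finset.Ioi i, pb j)) *
          (∑ j ∈ Finset.Ici i, pt j)) := by
  obtain _ | n := S
  · simp
  have hsum : ∑ i, pt i = ∑ i, pb i := hpt.2.trans hpb.2.symm
  have hpt₀ (i : Fin (n + 1)) := (htt i).ne'
  have hpb₀ (i : Fin (n + 1)) := (htb i).ne'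
  rw [Nat.add_sub_cancel, Fin.sum_filter_val_lt, Fin.sum_filter_val_lt]
  refine ⟨(sum_stick_terms_eq_sum_sub_mul h hsum hpt₀ hpb₀).symm, ?_⟩
  rw [show ∑ i, (pt i - pb i) * h i = -∑ i, (pb i - pt i) * h i by
      simp only [← sum_neg_distrib, ← neg_mul, neg_sub],
    ← sum_stick_terms_eq_sum_sub_mul h hsum.symm hpb₀ hpt₀, ← sum_neg_distrib]
  exact sum_congr rfl fun i _ => by ring

/-- The stick-breaking representation of the difference of two probability vectors
(Fact `DirRepresent` of the paper). -/
theorem stmt_18 (S : ℕ) (hS : 2 ≤ S) (pt pb : Fin S → ℝ)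
    (hpt : pt ∈ stdSimplex ℝ (Fin S)) (hpb : pb ∈ stdSimplex ℝ (Fin S))
    (htt : ∀ i, 0 < ∑ j ∈ Finset.Ici i, pt j)
    (htb : ∀ i, 0 < ∑ j ∈ Finset.Ici i, pb j)
    (h : Fin S → ℝ) :
    (∑ i, (pt i - pb i) * h i =
      ∑ i ∈ Finset.univ.filter (fun i : Fin S => (i : ℕ) < S - 1),
        (pt i / ∑ j ∈ Finset.Ici i, pt j - pb i / ∑ j ∈ Finset.Ici i, pb j) *
          (h i - (∑ j ∈ Finset.Ioi i, h j * pt j) / (∑ j ∈ Finset.Ioi i, pt j)) *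
          (∑ j ∈ Finset.Ici i, pb j)) ∧
    (∑ i, (pt i - pb i) * h i =
      ∑ i ∈ Finset.univ.filter (fun i : Fin S => (i : ℕ) < S - 1),
        (pt i / ∑ j ∈ Finset.Ici i, pt j - pb i / ∑ j ∈ Finset.Ici i, pb j) *
          (h i - (∑ j ∈ Finset.Ioi i, h j * pb j) / (∑ j ∈ Finset.Ioi i, pb j)) *
          (∑ j ∈ Finset.Ici i, pt j)) :=
  stmt_18_general S pt pb hpt hpb htt htb h
end

section
/- Let S ≥ 1, D > 0, n ≥ 1, and fix v ∈ [0,D]^S and p ∈ Δ^S. Let p̂ ∈ Δ^S be the average of n i.i.d. multinoulli trials with parameter p. Then there exists (on a possibly enlarged probability space carrying p̂) a random variable q̂ distributed as (1/n)·Binomial(n, pᵀv/D) such that E[ q̂ | p̂ᵀv ] = p̂ᵀv / D; consequently D·q̂ is stochastically optimistic for p̂ᵀv. -/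
/-!
Enlarge the sample space by a coin for each trial: given the trials `x`, trial `j` independently
succeeds with probability `v (x j) / D`, and `q̂` is the fraction of successes. Averaging over
`x`, the coins are independent with success probability `pᵀv / D`, so `n q̂` is
`Binomial(n, pᵀv / D)`. Given `x`, the expected number of successes is
`∑ j, v (x j) / D = n p̂ᵀv / D`; this is the conditional expectation, and Jensen's inequality on
each fibre `{x} × (success sets)` gives stochastic optimism.
-/

open MeasureTheory ProbabilityTheory Finset

noncomputable section

/-- The law of `(1/n)·Binomial(n, θ)`. -/
def binomAvgLaw (n : ℕ) (θ : ℝ) : Measure ℝ :=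
  ∑ k ∈ Finset.range (n + 1),
    ENNReal.ofReal ((n.choose k : ℝ) * θ ^ k * (1 - θ) ^ (n - k)) •
      Measure.dirac ((k : ℝ) / n)

/-- `X` is stochastically optimistic for `Y`: `E[u(X)] ≥ E[u(Y)]` for every convex
increasing `u : ℝ → ℝ` for which both expectations exist. -/
def StochasticallyOptimistic {Ω : Type*} [MeasurableSpace Ω] (μ : Measure Ω)
    (X Y : Ω → ℝ) : Prop :=
  ∀ u : ℝ → ℝ, ConvexOn ℝ Set.univ u → Monotone u →
    Integrable (fun ω => u (X ω)) μ → Integrable (fun ω => u (Y ω)) μ →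
    ∫ ω, u (Y ω) ∂μ ≤ ∫ ω, u (X ω) ∂μ

section WeightedDirac

variable {Ω : Type*} [Fintype Ω] [MeasurableSpace Ω]

def weightedDirac (c : Ω → ℝ) : Measure Ω :=
  ∑ ω, ENNReal.ofReal (c ω) • Measure.dirac ω

instance (c : Ω → ℝ) : IsFiniteMeasure (weightedDirac c) :=
  ⟨by simp [weightedDirac, Measure.finsetSum_apply, ENNReal.sum_lt_top]⟩

lemma weightedDirac_apply [MeasurableSingletonClass Ω] (c : Ω → ℝ) (s : Set Ω) :
    weightedDirac c s = ∑ ω, ENNReal.ofReal (c ω) * s.indicator 1 ω := by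
  simp only [weightedDirac, Measure.finsetSum_apply, Measure.smul_apply,
    Measure.dirac_apply, smul_eq_mul]

lemma weightedDirac_singleton [MeasurableSingletonClass Ω] (c : Ω → ℝ) (ω : Ω) :
    weightedDirac c {ω} = ENNReal.ofReal (c ω) := by
  rw [weightedDirac_apply, Finset.sum_eq_single ω (fun ω' _ h => by simp [h]) (by simp)]
  simp

lemma isProbabilityMeasure_weightedDirac [MeasurableSingletonClass Ω] {c : Ω → ℝ}
    (hc : 0 ≤ c) (hc₁ : ∑ ω, c ω = 1) : IsProbabilityMeasure (weightedDirac c) := by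
  constructor
  simp [weightedDirac_apply, ← ENNReal.ofReal_sum_of_nonneg fun ω _ => hc ω, hc₁]

lemma map_weightedDirac {β : Type*} [MeasurableSpace β] (c : Ω → ℝ) {f : Ω → β}
    (hf : Measurable f) :
    (weightedDirac c).map f = ∑ ω, ENNReal.ofReal (c ω) • Measure.dirac (f ω) := by
  rw [weightedDirac, ← Measure.mapₗ_apply_of_measurable hf, map_sum]
  simp [Measure.mapₗ_apply_of_measurable hf, Measure.map_dirac' hf]

lemma integral_weightedDirac [MeasurableSingletonClass Ω] {c : Ω → ℝ} (hc : 0 ≤ c)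
    (f : Ω → ℝ) : ∫ ω, f ω ∂weightedDirac c = ∑ ω, c ω * f ω := by
  simp [integral_fintype, measureReal_def, weightedDirac_singleton,
    ENNReal.toReal_ofReal (hc _)]

end WeightedDirac

section Marginals

variable {α β : Type*} [Fintype α] [Fintype β] [MeasurableSpace α] [MeasurableSpace β]

lemma map_fst_weightedDirac {c : α × β → ℝ} (hc : 0 ≤ c) :
    (weightedDirac c).map Prod.fst = weightedDirac fun a => ∑ b, c (a, b) := by
  rw [map_weightedDirac c measurable_fst, Fintype.sum_prod_type, weightedDirac]
  refine Finset.sum_congr rfl fun a _ => ?_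
  dsimp only
  rw [← Finset.sum_smul, ENNReal.ofReal_sum_of_nonneg fun b _ => hc _]

lemma map_snd_weightedDirac {c : α × β → ℝ} (hc : 0 ≤ c) :
    (weightedDirac c).map Prod.snd = weightedDirac fun b => ∑ a, c (a, b) := by
  rw [map_weightedDirac c measurable_snd, Fintype.sum_prod_type_right, weightedDirac]
  refine Finset.sum_congr rfl fun b _ => ?_
  dsimp only
  rw [← Finset.sum_smul, ENNReal.ofReal_sum_of_nonneg fun a _ => hc _]

end Marginals

lemma pi_weightedDirac {ι : Type*} [Fintype ι] [DecidableEq ι] {κ : ι → Type*}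
    [∀ i, Fintype (κ i)] [∀ i, MeasurableSpace (κ i)] [∀ i, MeasurableSingletonClass (κ i)]
    {c : ∀ i, κ i → ℝ} (hc : ∀ i, 0 ≤ c i) :
    Measure.pi (fun i => weightedDirac (c i)) = weightedDirac fun x => ∏ i, c i (x i) := by
  refine Measure.pi_eq fun s _ => ?_
  simp_rw [weightedDirac_apply, ← Finset.coe_univ, Set.indicator_pi_one_apply,
    ENNReal.ofReal_prod_of_nonneg fun i _ => hc i _, ← Finset.prod_mul_distrib]
  exact (Fintype.prod_sum fun i k => ENNReal.ofReal (c i k) * (s i).indicator 1 k).symm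

lemma ConvexOn.sum_mul_apply_le {ι : Type*} {t : Finset ι} {u : ℝ → ℝ}
    (hu : ConvexOn ℝ Set.univ u) {w x : ι → ℝ} {m : ℝ} (hw : ∀ i ∈ t, 0 ≤ w i)
    (hm : ∑ i ∈ t, w i * x i = (∑ i ∈ t, w i) * m) :
    (∑ i ∈ t, w i) * u m ≤ ∑ i ∈ t, w i * u (x i) := by
  rcases (Finset.sum_nonneg hw).eq_or_lt with h0 | hpos
  · have hw0 := (Finset.sum_eq_zero_iff_of_nonneg hw).1 h0.symm
    rw [← h0, zero_mul]
    exact (Finset.sum_eq_zero fun i hi => by rw [hw0 i hi, zero_mul]).ge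
  · have hcenter : t.centerMass w x = m := by
      rw [Finset.centerMass, smul_eq_mul]
      simp_rw [smul_eq_mul, hm]
      field_simp
    have hjensen := hu.map_centerMass_le (p := x) hw hpos fun _ _ => Set.mem_univ _
    rw [hcenter, Finset.centerMass, smul_eq_mul, le_inv_mul_iff₀ hpos] at hjensen
    simpa using hjensen

section Fiberwise

variable {α β : Type*} [Fintype α] [Fintype β] [MeasurableSpace α] [MeasurableSpace β]
  [MeasurableSingletonClass α] [MeasurableSingletonClass β] {c : α × β → ℝ}

lemma setIntegral_preimage_fst_weightedDirac (hc : 0 ≤ c) (T : Set α) (f : α × β → ℝ) :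
    ∫ ω in Prod.fst ⁻¹' T, f ω ∂weightedDirac c
      = ∑ a, T.indicator (fun a => ∑ b, c (a, b) * f (a, b)) a := by
  rw [← integral_indicator MeasurableSet.of_discrete, integral_weightedDirac hc,
    Fintype.sum_prod_type]
  refine Finset.sum_congr rfl fun a _ => ?_
  by_cases ha : a ∈ T <;> simp [ha]

lemma condExp_comap_fst_weightedDirac {γ : Type*} [mγ : MeasurableSpace γ] (hc : 0 ≤ c)
    {Y : α → γ} {φ : γ → ℝ} (hφ : Measurable φ) {f : α × β → ℝ}
    (hf : ∀ a, ∑ b, c (a, b) * f (a, b) = (∑ b, c (a, b)) * φ (Y a)) :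
    (weightedDirac c)[f | MeasurableSpace.comap (fun ω => Y ω.1) mγ]
      =ᵐ[weightedDirac c] fun ω => φ (Y ω.1) := by
  refine (ae_eq_condExp_of_forall_setIntegral_eq (fun _ _ => MeasurableSet.of_discrete)
    Integrable.of_finite
    (fun _ _ _ => Integrable.of_finite.integrableOn) ?_ ?_).symm
  · rintro _ ⟨A, -, rfl⟩ -
    rw [show (fun ω : α × β => Y ω.1) ⁻¹' A = Prod.fst ⁻¹' (Y ⁻¹' A) from rfl,
      setIntegral_preimage_fst_weightedDirac hc,
      setIntegral_preimage_fst_weightedDirac hc]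
    simp_rw [hf, Finset.sum_mul]
  · exact (hφ.comp (Measurable.of_comap_le le_rfl)).aestronglyMeasurable

lemma stochasticallyOptimistic_weightedDirac (hc : 0 ≤ c) {f : α × β → ℝ} {g : α → ℝ}
    (hf : ∀ a, ∑ b, c (a, b) * f (a, b) = (∑ b, c (a, b)) * g a) :
    StochasticallyOptimistic (weightedDirac c) f fun ω => g ω.1 := by
  intro u hu _ _ _
  rw [integral_weightedDirac hc, integral_weightedDirac hc, Fintype.sum_prod_type,
    Fintype.sum_prod_type]
  refine Finset.sum_le_sum fun a _ => ?_
  dsimp only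
  rw [← Finset.sum_mul]
  exact hu.sum_mul_apply_le (fun b _ => hc _) (hf a)

end Fiberwise

section Bernoulli

variable {ι : Type*} [Fintype ι] [DecidableEq ι]

def bernoulliWeight (t : ι → ℝ) (T : Finset ι) : ℝ :=
  (∏ i ∈ T, t i) * ∏ i ∈ Tᶜ, (1 - t i)

lemma bernoulliWeight_nonneg {t : ι → ℝ} (ht₀ : 0 ≤ t) (ht₁ : t ≤ 1) (T : Finset ι) :
    0 ≤ bernoulliWeight t T :=
  mul_nonneg (prod_nonneg fun i _ => ht₀ i) (prod_nonneg fun i _ => sub_nonneg.2 (ht₁ i))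

lemma bernoulliWeight_eq_prod_ite (t : ι → ℝ) (T : Finset ι) :
    bernoulliWeight t T = ∏ i, if i ∈ T then t i else 1 - t i := by
  rw [bernoulliWeight, Finset.prod_ite]
  congr <;> ext <;> simp

lemma bernoulliWeight_const (a : ℝ) (T : Finset ι) :
    bernoulliWeight (fun _ => a) T = a ^ #T * (1 - a) ^ (Fintype.card ι - #T) := by
  simp [bernoulliWeight, Finset.card_compl]

lemma sum_bernoulliWeight (t : ι → ℝ) : ∑ T, bernoulliWeight t T = 1 := by
  simp [bernoulliWeight, ← Fintype.prod_add]

lemma sum_bernoulliWeight_mul_ite_mem (t : ι → ℝ) (i : ι) :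
    ∑ T, bernoulliWeight t T * (if i ∈ T then 1 else 0) = t i := by
  have hupdate : ∀ T : Finset ι, bernoulliWeight t T * (if i ∈ T then 1 else 0)
      = (∏ j ∈ T, t j) * ∏ j ∈ Tᶜ, Function.update (fun j => 1 - t j) i 0 j := by
    intro T
    by_cases hi : i ∈ T
    · simp only [bernoulliWeight, hi, if_true, mul_one]
      congr 1
      refine Finset.prod_congr rfl fun j hj => ?_
      rw [Function.update_of_ne (by rintro rfl; simp [hi] at hj)]
    · rw [Finset.prod_eq_zero (Finset.mem_compl.2 hi) (Function.update_self ..)]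
      simp [hi]
  simp_rw [hupdate, ← Fintype.prod_add]
  rw [Finset.prod_eq_single i (fun j _ hj => by simp [hj]) (by simp)]
  simp

lemma sum_bernoulliWeight_mul_card (t : ι → ℝ) :
    ∑ T, bernoulliWeight t T * #T = ∑ i, t i := by
  have hcard : ∀ T : Finset ι, (#T : ℝ) = ∑ i, if i ∈ T then 1 else 0 := by
    simp
  simp_rw [hcard, Finset.mul_sum]
  rw [Finset.sum_comm]
  exact Finset.sum_congr rfl fun i _ => sum_bernoulliWeight_mul_ite_mem t i

end Bernoulli

lemma map_card_div_weightedDirac_bernoulliWeight (n : ℕ) (a : ℝ) :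
    (weightedDirac (bernoulliWeight fun _ : Fin n => a)).map (fun T => (#T : ℝ) / n)
      = binomAvgLaw n a := by
  rw [map_weightedDirac _ Measurable.of_discrete, binomAvgLaw, ← Finset.powerset_univ]
  simp_rw [bernoulliWeight_const, Fintype.card_fin]
  rw [Finset.sum_powerset_apply_card
    (fun k => ENNReal.ofReal (a ^ k * (1 - a) ^ (n - k)) • Measure.dirac ((k : ℝ) / n))]
  refine Finset.sum_congr (by simp) fun k _ => ?_
  rw [Finset.card_univ, Fintype.card_fin, ← Nat.cast_smul_eq_nsmul ENNReal, smul_smul,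
    ← ENNReal.ofReal_natCast, ← ENNReal.ofReal_mul (Nat.cast_nonneg _), mul_assoc]

section Coupling

variable {ι κ : Type*} [Fintype ι] [DecidableEq ι]

/-- `ω = (x, T)`: the trials `x` and the set `T` of trials whose coin succeeds. -/
def couplingWeight (p θ : κ → ℝ) (ω : (ι → κ) × Finset ι) : ℝ :=
  (∏ j, p (ω.1 j)) * bernoulliWeight (fun j => θ (ω.1 j)) ω.2

variable {p θ : κ → ℝ}

lemma couplingWeight_nonneg (hp : 0 ≤ p) (hθ₀ : 0 ≤ θ) (hθ₁ : θ ≤ 1) :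
    0 ≤ couplingWeight (ι := ι) p θ := fun ω =>
  mul_nonneg (prod_nonneg fun _ _ => hp _)
    (bernoulliWeight_nonneg (t := fun j => θ (ω.1 j)) (fun _ => hθ₀ _) (fun _ => hθ₁ _) _)

lemma sum_couplingWeight_snd (x : ι → κ) :
    ∑ T, couplingWeight p θ (x, T) = ∏ j, p (x j) := by
  simp [couplingWeight, ← Finset.mul_sum, sum_bernoulliWeight]

lemma sum_couplingWeight_mul_card (x : ι → κ) :
    ∑ T, couplingWeight p θ (x, T) * #T = (∏ j, p (x j)) * ∑ j, θ (x j) := by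
  simp [couplingWeight, mul_assoc, ← Finset.mul_sum, sum_bernoulliWeight_mul_card]

lemma sum_couplingWeight_fst [Fintype κ] (hp₁ : ∑ k, p k = 1) (T : Finset ι) :
    ∑ x, couplingWeight p θ (x, T) = bernoulliWeight (fun _ => ∑ k, p k * θ k) T := by
  simp_rw [couplingWeight, bernoulliWeight_eq_prod_ite, ← Finset.prod_mul_distrib]
  rw [← Fintype.prod_sum fun j k => p k * if j ∈ T then θ k else 1 - θ k]
  refine Finset.prod_congr rfl fun j _ => ?_
  split_ifs
  · rfl
  · simp [mul_sub, Finset.sum_sub_distrib, hp₁]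

lemma sum_couplingWeight [Fintype κ] (hp₁ : ∑ k, p k = 1) :
    ∑ ω, couplingWeight (ι := ι) p θ ω = 1 := by
  simp [Fintype.sum_prod_type_right, sum_couplingWeight_fst hp₁, sum_bernoulliWeight]

end Coupling

lemma sum_empDist_mul {S n : ℕ} (x : Fin n → Fin S) (v : Fin S → ℝ) :
    ∑ i, empDist x i * v i = (∑ j, v (x j)) / n := by
  simp_rw [empDist, div_mul_eq_mul_div, ← Finset.sum_div, ← Finset.sum_fiberwise univ x]
  congr 1
  refine Finset.sum_congr rfl fun i _ => ?_
  rw [Finset.sum_congr rfl fun j hj => by rw [(Finset.mem_filter.1 hj).2], Finset.sum_const,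
    nsmul_eq_mul]

theorem stmt_19_general (S n : ℕ) (D : ℝ) (hD : 0 < D)
    (v : Fin S → ℝ) (hv : ∀ i, v i ∈ Set.Icc (0 : ℝ) D)
    (p : Fin S → ℝ) (hp : p ∈ stdSimplex ℝ (Fin S)) :
    ∃ (Ω' : Type) (_mΩ' : MeasurableSpace Ω') (μ' : Measure Ω'),
      IsProbabilityMeasure μ' ∧
      ∃ (pr : Ω' → (Fin n → Fin S)) (qhat : Ω' → ℝ),
        Measurable pr ∧ Measurable qhat ∧
        μ'.map pr = trialsLaw p n ∧
        μ'.map qhat = binomAvgLaw n ((∑ i, p i * v i) / D) ∧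
        (μ'[qhat |
            MeasurableSpace.comap (fun ω' => ∑ i, empDist (pr ω') i * v i)
              Real.measurableSpace]
          =ᵐ[μ'] fun ω' => (∑ i, empDist (pr ω') i * v i) / D) ∧
        StochasticallyOptimistic μ' (fun ω' => D * qhat ω')
          (fun ω' => ∑ i, empDist (pr ω') i * v i) := by
  set θ : Fin S → ℝ := fun i => v i / D
  have hc : 0 ≤ couplingWeight (ι := Fin n) p θ :=
    couplingWeight_nonneg hp.1 (fun i => div_nonneg (hv i).1 hD.le)
      (fun i => (div_le_one hD).2 (hv i).2)
  have hmean : ∀ x : Fin n → Fin S, ∑ T, couplingWeight p θ (x, T) * ((#T : ℝ) / n)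
      = (∑ T, couplingWeight p θ (x, T)) * ((∑ i, empDist x i * v i) / D) := by
    intro x
    simp_rw [mul_div_assoc', ← Finset.sum_div, sum_couplingWeight_mul_card,
      sum_couplingWeight_snd, sum_empDist_mul, θ, ← Finset.sum_div]
    ring
  have hθ : ∑ k, p k * θ k = (∑ i, p i * v i) / D := by
    simp [θ, Finset.sum_div, mul_div_assoc]
  have := isProbabilityMeasure_weightedDirac hc (sum_couplingWeight hp.2)
  refine ⟨_, inferInstance, weightedDirac (couplingWeight p θ), inferInstance, Prod.fst,
    fun ω => (#ω.2 : ℝ) / n, measurable_fst, Measurable.of_discrete, ?_, ?_,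
    condExp_comap_fst_weightedDirac (Y := fun x => ∑ i, empDist x i * v i) (φ := (· / D)) hc
      (measurable_id.div_const D) hmean,
    stochasticallyOptimistic_weightedDirac (g := fun x => ∑ i, empDist x i * v i) hc
      fun x => ?_⟩
  · simp_rw [map_fst_weightedDirac hc, sum_couplingWeight_snd]
    exact (pi_weightedDirac fun _ => hp.1).symm
  · refine (Measure.map_map (g := fun T : Finset (Fin n) => (#T : ℝ) / n) Measurable.of_discrete
      measurable_snd).symm.trans ?_
    rw [map_snd_weightedDirac hc]
    simp_rw [sum_couplingWeight_fst hp.2, ← hθ]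
    exact map_card_div_weightedDirac_bernoulliWeight n _
  · simp_rw [mul_left_comm _ D, ← Finset.mul_sum, hmean x]
    field_simp

/-- The Binomial–Multinomial coupling (Lemma `BB` and its corollary in the paper):
on an enlarged probability space carrying the multinoulli trials, there is a
`(1/n)·Binomial(n, pᵀv/D)` random variable `q̂` with `E[q̂ | p̂ᵀv] = p̂ᵀv / D`, and
consequently `D·q̂` is stochastically optimistic for `p̂ᵀv`. -/
theorem stmt_19 (S n : ℕ) (hS : 1 ≤ S) (hn : 1 ≤ n) (D : ℝ) (hD : 0 < D)
    (v : Fin S → ℝ) (hv : ∀ i, v i ∈ Set.Icc (0 : ℝ) D)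
    (p : Fin S → ℝ) (hp : p ∈ stdSimplex ℝ (Fin S)) :
    ∃ (Ω' : Type) (_mΩ' : MeasurableSpace Ω') (μ' : Measure Ω'),
      IsProbabilityMeasure μ' ∧
      ∃ (pr : Ω' → (Fin n → Fin S)) (qhat : Ω' → ℝ),
        Measurable pr ∧ Measurable qhat ∧
        μ'.map pr = trialsLaw p n ∧
        μ'.map qhat = binomAvgLaw n ((∑ i, p i * v i) / D) ∧
        (μ'[qhat |
            MeasurableSpace.comap (fun ω' => ∑ i, empDist (pr ω') i * v i)
              Real.measurableSpace]
          =ᵐ[μ'] fun ω' => (∑ i, empDist (pr ω') i * v i) / D) ∧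
        StochasticallyOptimistic μ' (fun ω' => D * qhat ω')
          (fun ω' => ∑ i, empDist (pr ω') i * v i) :=
  stmt_19_general S n D hD v hv p hp
end
end
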